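/- arXiv:2108.08193 — 3 statements merged into one kernel-verified Lean document; each statement's English description precedes it below -/
import Mathlib

section
/- Let f be a nonzero polynomial in n complex variables, and let w ∈ ℕ^n and v ∈ ℕ^n be weight vectors. Then for every sufficiently large integer ν, the iterated face function (f_w)_v equals the face function f_{v + ν w}. More precisely, there exists N such that for all ν ≥ N, Δ(v; f_w) = Δ(v + ν w; f) as subsets of exponents of f, and hence (f_w)_v = f_{v + ν w}. -/
open MvPolynomial

noncomputable section

/-- The `w`-weight of a multi-index `α`, i.e. `⟨α, w⟩ = ∑ i, α i * w i`. -/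
def wdeg {n : ℕ} (w : Fin n → ℕ) (α : Fin n →₀ ℕ) : ℕ := ∑ i, α i * w i

/-- `d(w; f)`: the minimal `w`-weight of an exponent of `f` (with nonzero
coefficient).  (For `f = 0` this is `sInf ∅ = 0` by convention.) -/
def dmin {n : ℕ} (w : Fin n → ℕ) (f : MvPolynomial (Fin n) ℂ) : ℕ :=
  sInf (wdeg w '' ↑f.support)

/-- The face function `f_w`: the sum of the terms of `f` whose exponents have
minimal `w`-weight `d(w; f)`. -/
def face {n : ℕ} (w : Fin n → ℕ) (f : MvPolynomial (Fin n) ℂ) :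
    MvPolynomial (Fin n) ℂ :=
  ∑ α ∈ f.support.filter (fun α => wdeg w α = dmin w f), monomial α (coeff α f)

/-- `Δ(w; f)`: the set of exponents of `f` of minimal `w`-weight. -/
def Delta {n : ℕ} (w : Fin n → ℕ) (f : MvPolynomial (Fin n) ℂ) :
    Finset (Fin n →₀ ℕ) :=
  f.support.filter (fun α => wdeg w α = dmin w f)

lemma coeff_face {n : ℕ} (w : Fin n → ℕ) (f : MvPolynomial (Fin n) ℂ)
    (β : Fin n →₀ ℕ) :
    coeff β (face w f) = if β ∈ Delta w f then coeff β f else 0 := by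
  unfold face Delta
  rw [coeff_sum]
  simp only [coeff_monomial]
  rw [Finset.sum_ite_eq' (f.support.filter (fun α => wdeg w α = dmin w f)) β
    (fun x => coeff x f)]

lemma support_face {n : ℕ} (w : Fin n → ℕ) (f : MvPolynomial (Fin n) ℂ) :
    (face w f).support = Delta w f := by
  ext β
  simp only [mem_support_iff, coeff_face]
  constructor
  · intro h
    by_contra hb
    simp [hb] at h
  · intro hb
    have : coeff β f ≠ 0 := by
      have := Finset.mem_filter.mp hb
      exact mem_support_iff.mp this.1
    simp [hb, this]

lemma dmin_le {n : ℕ} (w : Fin n → ℕ) (f : MvPolynomial (Fin n) ℂ)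
    {α : Fin n →₀ ℕ} (h : α ∈ f.support) : dmin w f ≤ wdeg w α :=
  Nat.sInf_le ⟨α, h, rfl⟩

lemma exists_dmin {n : ℕ} (w : Fin n → ℕ) (f : MvPolynomial (Fin n) ℂ)
    (hf : f ≠ 0) : ∃ α ∈ f.support, wdeg w α = dmin w f := by
  have hne : (wdeg w '' ↑f.support).Nonempty := by
    obtain ⟨α, hα⟩ := (support_nonempty.mpr hf)
    exact ⟨wdeg w α, α, hα, rfl⟩
  obtain ⟨α, hα, h⟩ := Nat.sInf_mem hne
  exact ⟨α, hα, h⟩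

lemma delta_nonempty {n : ℕ} (w : Fin n → ℕ) (f : MvPolynomial (Fin n) ℂ)
    (hf : f ≠ 0) : (Delta w f).Nonempty := by
  obtain ⟨α, hα, h⟩ := exists_dmin w f hf
  exact ⟨α, Finset.mem_filter.mpr ⟨hα, h⟩⟩

lemma wdeg_add {n : ℕ} (w v : Fin n → ℕ) (ν : ℕ) (α : Fin n →₀ ℕ) :
    wdeg (fun i => v i + ν * w i) α = wdeg v α + ν * wdeg w α := by
  simp [wdeg, mul_add, Finset.sum_add_distrib, Finset.mul_sum, mul_left_comm]

/-- For all sufficiently large `ν`, the iterated face `(f_w)_v` is the face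
function `f_{v + ν w}`; more precisely `Δ(v; f_w) = Δ(v + ν w; f)` and
`(f_w)_v = f_{v + ν w}`. -/
theorem iterated_face {n : ℕ} (f : MvPolynomial (Fin n) ℂ) (hf : f ≠ 0)
    (w v : Fin n → ℕ) :
    ∃ N : ℕ, ∀ ν ≥ N,
      Delta v (face w f) = Delta (fun i => v i + ν * w i) f ∧
        face v (face w f) = face (fun i => v i + ν * w i) f := by
  set d := dmin w f with hd
  have hface_ne : face w f ≠ 0 := by
    intro h
    have := support_face w f
    rw [h] at this
    obtain ⟨α, hα⟩ := delta_nonempty w f hf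
    rw [← this] at hα
    simp at hα
  set d' := dmin v (face w f) with hd'
  obtain ⟨α₀, hα₀, hα₀d⟩ := exists_dmin v (face w f) hface_ne
  rw [support_face] at hα₀
  have hα₀S : α₀ ∈ f.support := (Finset.mem_filter.mp hα₀).1
  have hα₀w : wdeg w α₀ = d := (Finset.mem_filter.mp hα₀).2
  set M := f.support.sup (wdeg v) with hM
  refine ⟨M + 1, fun ν hν => ?_⟩
  -- key: the weight of α under v + ν w
  have hwt : ∀ α, wdeg (fun i => v i + ν * w i) α = wdeg v α + ν * wdeg w α :=
    wdeg_add w v ν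
  -- dmin of the combined weight
  have hlb : ∀ α ∈ f.support, d' + ν * d ≤ wdeg (fun i => v i + ν * w i) α := by
    intro α hα
    rw [hwt]
    by_cases hαD : α ∈ Delta w f
    · have h1 : wdeg w α = d := (Finset.mem_filter.mp hαD).2
      have h2 : d' ≤ wdeg v α := by
        apply dmin_le
        rw [support_face]; exact hαD
      rw [h1]; omega
    · have h1 : d ≤ wdeg w α := dmin_le w f hα
      have h2 : wdeg w α ≠ d := fun h => hαD (Finset.mem_filter.mpr ⟨hα, h⟩)
      have h3 : d + 1 ≤ wdeg w α := by omega
      have h4 : wdeg v α ≤ M := Finset.le_sup hα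
      have h5 : d' ≤ M := by rw [hd', ← hα₀d]; exact Finset.le_sup hα₀S
      have h6 : ν * (d + 1) ≤ ν * wdeg w α := Nat.mul_le_mul_left ν h3
      rw [Nat.mul_add, Nat.mul_one] at h6
      omega
  have hdmin : dmin (fun i => v i + ν * w i) f = d' + ν * d := by
    apply le_antisymm
    · have : wdeg (fun i => v i + ν * w i) α₀ = d' + ν * d := by
        rw [hwt, hα₀d, hα₀w]
      exact this ▸ dmin_le _ f hα₀S
    · exact le_csInf ⟨_, α₀, hα₀S, rfl⟩ (by rintro x ⟨α, hα, rfl⟩; exact hlb α hα)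
  have hsets : Delta v (face w f) = Delta (fun i => v i + ν * w i) f := by
    unfold Delta
    rw [support_face]
    ext α
    simp only [Finset.mem_filter]
    constructor
    · rintro ⟨hαD, hαv⟩
      have hαS : α ∈ f.support := (Finset.mem_filter.mp hαD).1
      have hαw : wdeg w α = d := (Finset.mem_filter.mp hαD).2
      refine ⟨hαS, ?_⟩
      rw [hwt, hαv, hαw, hdmin]
    · rintro ⟨hαS, hαwt⟩
      rw [hwt, hdmin] at hαwt
      -- show α ∈ Delta w f
      have hαD : α ∈ Delta w f := by
        by_contra hαD
        have h1 : d ≤ wdeg w α := dmin_le w f hαS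
        have h2 : wdeg w α ≠ d := fun h => hαD (Finset.mem_filter.mpr ⟨hαS, h⟩)
        have h3 : d + 1 ≤ wdeg w α := by omega
        have h4 : wdeg v α ≤ M := Finset.le_sup hαS
        have h5 : d' ≤ M := by rw [hd', ← hα₀d]; exact Finset.le_sup hα₀S
        have h6 : ν * (d + 1) ≤ ν * wdeg w α := Nat.mul_le_mul_left ν h3
        rw [Nat.mul_add, Nat.mul_one] at h6
        omega
      have hαw : wdeg w α = d := (Finset.mem_filter.mp hαD).2
      refine ⟨hαD, ?_⟩
      rw [hαw] at hαwt
      omega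
  refine ⟨hsets, ?_⟩
  have face_eq : ∀ (u : Fin n → ℕ) (g : MvPolynomial (Fin n) ℂ),
      face u g = ∑ α ∈ Delta u g, monomial α (coeff α g) := fun _ _ => rfl
  rw [face_eq v (face w f), hsets, face_eq (fun i => v i + ν * w i) f]
  apply Finset.sum_congr rfl
  intro α hα
  rw [← hsets] at hα
  have hαD : α ∈ Delta w f := by
    have h := (Finset.mem_filter.mp hα).1
    rwa [support_face] at h
  rw [coeff_face, if_pos hαD]
end
end

section
/- Let f and g be nonzero polynomials in n variables over ℂ. Then the Newton polyhedron of the product is the Minkowski sum: Γ₊(fg) = Γ₊(f) + Γ₊(g), where Γ₊(h) denotes the convex hull in ℝ₊^n of the union over exponents α of h (with nonzero coefficient) of the translated orthants α + ℝ₊^n. -/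
/-!
The Newton polyhedron of `h` is the dominant `conv E + ℝ₊ⁿ` of its exponent set `E`, and
dominants are additive in `E`; as `supp (fg) ⊆ supp f + supp g`, one inclusion follows. For the
other it suffices, by Hahn–Banach, that every linear functional `ℓ` takes on `supp (fg)` a value
at least `ℓ (β + γ)` for all `β ∈ supp f`, `γ ∈ supp g`. Among the `ℓ`-maximal exponents of `f`
and of `g` pick a pair `(β₀, γ₀)` whose sum is reached in only one way (`σ →₀ ℕ` has unique
sums); by maximality `β₀ + γ₀` is then reached in only one way from all of `supp f × supp g`, so
its coefficient in `fg` is `f_{β₀} g_{γ₀} ≠ 0`.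
-/

open MvPolynomial
open scoped Pointwise

noncomputable section

/-- The Newton polyhedron `Γ₊(f)`: the convex hull in `ℝⁿ` of the union over
exponents `α` of `f` (with nonzero coefficient) of the translated orthants
`α + ℝ₊ⁿ = {x | ∀ i, α i ≤ x i}`. -/
def NewtonPolyhedron {n : ℕ} (f : MvPolynomial (Fin n) ℂ) : Set (Fin n → ℝ) :=
  convexHull ℝ (⋃ α ∈ f.support, {x : Fin n → ℝ | ∀ i, (α i : ℝ) ≤ x i})

namespace MvPolynomial

variable {σ R M : Type*} [CommSemiring R] [NoZeroDivisors R]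
  [AddCommMonoid M] [LinearOrder M] [IsOrderedCancelAddMonoid M]

theorem exists_mem_support_mul_apply_le (ℓ : (σ →₀ ℕ) →+ M) {f g : MvPolynomial σ R}
    {β γ : σ →₀ ℕ} (hβ : β ∈ f.support) (hγ : γ ∈ g.support) :
    ∃ α ∈ (f * g).support, ℓ (β + γ) ≤ ℓ α := by
  classical
  obtain ⟨β₁, hβ₁, hβ₁max⟩ := f.support.exists_max_image ℓ ⟨β, hβ⟩
  obtain ⟨γ₁, hγ₁, hγ₁max⟩ := g.support.exists_max_image ℓ ⟨γ, hγ⟩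
  obtain ⟨β₀, hβ₀, γ₀, hγ₀, hunique⟩ := UniqueSums.uniqueAdd_of_nonempty
    (A := {b ∈ f.support | ℓ b = ℓ β₁}) (B := {c ∈ g.support | ℓ c = ℓ γ₁})
    ⟨β₁, by simp [hβ₁]⟩ ⟨γ₁, by simp [hγ₁]⟩
  rw [Finset.mem_filter] at hβ₀ hγ₀
  have hmax : UniqueAdd (f.support.image ℓ) (g.support.image ℓ) (ℓ β₁) (ℓ γ₁) := by
    intro b c hb hc hbc
    simp only [Finset.mem_image] at hb hc
    obtain ⟨b, hb, rfl⟩ := hb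
    obtain ⟨c, hc, rfl⟩ := hc
    exact (add_eq_add_iff_eq_and_eq (hβ₁max b hb) (hγ₁max c hc)).1 hbc
  have hcoeff : coeff (β₀ + γ₀) (f * g) = coeff β₀ f * coeff γ₀ g :=
    AddMonoidAlgebra.coeff_mul_add_of_uniqueAdd
      (UniqueAdd.of_image_filter ℓ.toAddHom hβ₀.2 hγ₀.2 hmax hunique)
  refine ⟨β₀ + γ₀, ?_, ?_⟩
  · rw [mem_support_iff, hcoeff]
    exact mul_ne_zero (mem_support_iff.1 hβ₀.1) (mem_support_iff.1 hγ₀.1)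
  · rw [map_add, map_add, hβ₀.2, hγ₀.2]
    exact add_le_add (hβ₁max β hβ) (hγ₁max γ hγ)

end MvPolynomial

theorem Set.Ici_zero_add_Ici_zero {α : Type*} [AddZeroClass α] [Preorder α] [AddLeftMono α]
    [AddRightMono α] : Set.Ici (0 : α) + Set.Ici 0 = Set.Ici 0 :=
  ((Set.Ici_add_Ici_subset 0 0).trans_eq (by rw [add_zero])).antisymm
    (Set.subset_add_left _ Set.self_mem_Ici)

section Dominant

variable {σ : Type*}

/-- The dominant `conv s + ℝ₊^σ` of the convex hull of `s`. -/
def dominant (s : Set (σ → ℝ)) : Set (σ → ℝ) :=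
  convexHull ℝ s + Set.Ici 0

theorem subset_dominant (s : Set (σ → ℝ)) : s ⊆ dominant s := fun x hx =>
  ⟨x, subset_convexHull ℝ s hx, 0, Set.self_mem_Ici, add_zero x⟩

theorem dominant_mono {s t : Set (σ → ℝ)} (h : s ⊆ t) : dominant s ⊆ dominant t :=
  Set.add_subset_add_right (convexHull_mono h)

theorem convex_dominant (s : Set (σ → ℝ)) : Convex ℝ (dominant s) :=
  (convex_convexHull ℝ s).add (convex_Ici 0)

theorem Set.Finite.isClosed_dominant {s : Set (σ → ℝ)} (hs : s.Finite) :
    IsClosed (dominant s) :=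
  isClosed_Ici.add_left_of_isCompact (hs.isCompact_convexHull ℝ)

theorem dominant_add (s t : Set (σ → ℝ)) : dominant (s + t) = dominant s + dominant t := by
  rw [dominant, dominant, dominant, convexHull_add, add_add_add_comm, Set.Ici_zero_add_Ici_zero]

theorem dominant_subset_dominant {s t : Set (σ → ℝ)} (h : s ⊆ dominant t) :
    dominant s ⊆ dominant t :=
  calc dominant s ⊆ dominant t + Set.Ici 0 :=
        Set.add_subset_add_right (convexHull_min h (convex_dominant t))
    _ = dominant t := by rw [dominant, add_assoc, Set.Ici_zero_add_Ici_zero]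

end Dominant

def castExponent {σ : Type*} : (σ →₀ ℕ) →+ (σ → ℝ) where
  toFun α i := α i
  map_zero' := by ext; simp
  map_add' _ _ := by ext; simp

theorem newtonPolyhedron_eq_dominant {n : ℕ} (f : MvPolynomial (Fin n) ℂ) :
    NewtonPolyhedron f = dominant (castExponent '' f.support) := by
  have : (⋃ α ∈ f.support, {x : Fin n → ℝ | ∀ i, (α i : ℝ) ≤ x i}) =
      castExponent '' f.support + Set.Ici 0 := by
    rw [← Set.iUnion_add_left_image, Set.biUnion_image]
    simp only [Set.image_const_add_Ici, add_zero]
    rfl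
  rw [NewtonPolyhedron, this, convexHull_add, (convex_Ici 0).convexHull_eq, dominant]

theorem newtonPolyhedron_mul_general {n : ℕ} (f g : MvPolynomial (Fin n) ℂ) :
    NewtonPolyhedron (f * g) = NewtonPolyhedron f + NewtonPolyhedron g := by
  classical
  simp only [newtonPolyhedron_eq_dominant, ← dominant_add, ← Set.image_add, ← Finset.coe_add]
  refine (dominant_mono (Set.image_mono (support_mul f g))).antisymm
    (dominant_subset_dominant ?_)
  rintro _ ⟨_, hβγ, rfl⟩
  obtain ⟨β, hβ, γ, hγ, rfl⟩ := Finset.mem_add.1 hβγ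
  rw [← iInter_halfSpaces_eq (convex_dominant _)
    ((Set.toFinite _).image _).isClosed_dominant]
  refine Set.mem_iInter.2 fun ℓ => ?_
  obtain ⟨α, hα, hle⟩ :=
    exists_mem_support_mul_apply_le (ℓ.toLinearMap.toAddMonoidHom.comp castExponent) hβ hγ
  exact ⟨castExponent α, subset_dominant _ ⟨α, hα, rfl⟩, hle⟩

/-- The Newton polyhedron of a product of nonzero polynomials is the Minkowski
sum of the Newton polyhedra: `Γ₊(fg) = Γ₊(f) + Γ₊(g)`. -/
theorem newtonPolyhedron_mul {n : ℕ} (f g : MvPolynomial (Fin n) ℂ)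
    (hf : f ≠ 0) (hg : g ≠ 0) :
    NewtonPolyhedron (f * g) = NewtonPolyhedron f + NewtonPolyhedron g :=
  newtonPolyhedron_mul_general f g

end
end

section
/- Let f be a nonzero polynomial in n complex variables and I ⊆ {1,...,n} a subset such that the restriction f^I of f to the coordinate subspace ℂ^I is not identically zero. Then the Newton boundary of f^I equals the intersection of the Newton boundary of f with the coordinate subspace ℝ^I: Γ(f^I) = Γ(f) ∩ ℝ^I. In particular, Γ(f) ∩ ℝ^I is nonempty if and only if f^I ≢ 0. -/
open MvPolynomial

noncomputable section

open scoped Classical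

/-- The Newton boundary `Γ(f)` of `f`, as a subset of `ℝⁿ`: the union over
positive weight vectors `w` of the faces of `Γ₊(f)` on which the linear
functional `⟨·, w⟩` attains its minimum `d(w; f)` (i.e. the union of the
compact faces of `Γ₊(f)`). -/
def NewtonBoundary {n : ℕ} (f : MvPolynomial (Fin n) ℂ) : Set (Fin n → ℝ) :=
  ⋃ w ∈ {w : Fin n → ℕ | ∀ i, 0 < w i},
    {x ∈ NewtonPolyhedron f | ∑ i, x i * (w i : ℝ) = (dmin w f : ℝ)}

/-- The restriction `f^I` of `f` to the coordinate subspace `ℂ^I`: the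
polynomial obtained from `f` by setting `z i = 0` for `i ∉ I`. -/
def restrictTo {n : ℕ} (I : Set (Fin n)) (f : MvPolynomial (Fin n) ℂ) :
    MvPolynomial (Fin n) ℂ :=
  ∑ α ∈ f.support.filter (fun α => ∀ i ∉ I, α i = 0), monomial α (coeff α f)

namespace NewtonAux

variable {n : ℕ}

/-- the linear functional `x ↦ ∑ i, x i * c i`. -/
def csum (c : Fin n → ℝ) : (Fin n → ℝ) →ₗ[ℝ] ℝ where
  toFun x := ∑ i, x i * c i
  map_add' x y := by simp [add_mul, Finset.sum_add_distrib]
  map_smul' r x := by simp [Finset.mul_sum, mul_assoc]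

@[simp] lemma csum_apply (c : Fin n → ℝ) (x : Fin n → ℝ) : csum c x = ∑ i, x i * c i := rfl

def unionSet (f : MvPolynomial (Fin n) ℂ) : Set (Fin n → ℝ) :=
  ⋃ α ∈ f.support, {x : Fin n → ℝ | ∀ i, (α i : ℝ) ≤ x i}

lemma np_eq (f : MvPolynomial (Fin n) ℂ) :
    NewtonPolyhedron f = convexHull ℝ (unionSet f) := rfl

lemma mem_unionSet {f : MvPolynomial (Fin n) ℂ} {y : Fin n → ℝ} :
    y ∈ unionSet f ↔ ∃ α ∈ f.support, ∀ i, (α i : ℝ) ≤ y i := by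
  simp [unionSet]

/-- Face extraction lemma. -/
lemma mem_convexHull_face {E : Type*} [AddCommGroup E] [Module ℝ E]
    (L : E →ₗ[ℝ] ℝ) (d : ℝ) (s : Set E) (hs : ∀ y ∈ s, d ≤ L y)
    {x : E} (hx : x ∈ convexHull ℝ s) (hxd : L x = d) :
    x ∈ convexHull ℝ (s ∩ {y | L y = d}) := by
  rw [convexHull_eq] at hx
  obtain ⟨ι, t, w, z, hw0, hw1, hzs, hxc⟩ := hx
  have hxsum : x = ∑ i ∈ t, w i • z i := by
    rw [← hxc, Finset.centerMass_eq_of_sum_1 _ _ hw1]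
  have hLx : ∑ i ∈ t, w i * (L (z i) - d) = 0 := by
    have : L x = ∑ i ∈ t, w i * L (z i) := by
      rw [hxsum, map_sum]; simp [mul_comm]
    simp only [mul_sub, Finset.sum_sub_distrib, ← this, hxd, ← Finset.sum_mul, hw1]
    ring
  have hterm : ∀ i ∈ t, w i * (L (z i) - d) = 0 :=
    (Finset.sum_eq_zero_iff_of_nonneg (fun i hi =>
      mul_nonneg (hw0 i hi) (sub_nonneg.2 (hs _ (hzs i hi))))).1 hLx
  have hface : ∀ i ∈ t, w i ≠ 0 → L (z i) = d := by
    intro i hi hwi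
    have := hterm i hi
    rcases mul_eq_zero.1 this with h | h
    · exact absurd h hwi
    · linarith [sub_eq_zero.1 h]
  rw [← Finset.centerMass_filter_ne_zero z] at hxc
  refine hxc ▸ Finset.centerMass_mem_convexHull _ ?_ ?_ ?_
  · intro i hi; exact hw0 i (Finset.mem_filter.1 hi).1
  · rw [Finset.sum_filter_ne_zero, hw1]; norm_num
  · intro i hi
    obtain ⟨hit, hwi⟩ := Finset.mem_filter.1 hi
    exact ⟨hzs i hit, hface i hit hwi⟩

end NewtonAux

namespace NewtonAux

variable {n : ℕ}

lemma coeff_restrictTo (I : Set (Fin n)) (f : MvPolynomial (Fin n) ℂ) (β : Fin n →₀ ℕ) :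
    coeff β (restrictTo I f) = if (∀ i ∉ I, β i = 0) then coeff β f else 0 := by
  classical
  rw [restrictTo, coeff_sum]
  simp only [coeff_monomial]
  have hterm : ∀ x : Fin n →₀ ℕ, (if x = β then coeff x f else 0) =
      if x = β then coeff β f else 0 := by
    intro x; split_ifs with h
    · rw [h]
    · rfl
  simp_rw [hterm]
  rw [Finset.sum_ite_eq' (f.support.filter (fun α => ∀ i ∉ I, α i = 0)) β
      (fun _ => coeff β f)]
  by_cases hβ : ∀ i ∉ I, β i = 0
  · by_cases hs : β ∈ f.support
    · simp [Finset.mem_filter, hs, hβ]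
    · simp only [Finset.mem_filter, hs, false_and, if_false, if_pos hβ]
      exact (MvPolynomial.notMem_support_iff.1 hs).symm
  · simp [Finset.mem_filter, hβ]

lemma support_restrictTo (I : Set (Fin n)) (f : MvPolynomial (Fin n) ℂ) :
    (restrictTo I f).support = f.support.filter (fun α => ∀ i ∉ I, α i = 0) := by
  ext β
  simp only [mem_support_iff, coeff_restrictTo, Finset.mem_filter, mem_support_iff]
  by_cases hβ : ∀ i ∉ I, β i = 0 <;> simp [hβ] <;> tauto

lemma restrictTo_ne_zero_iff (I : Set (Fin n)) (f : MvPolynomial (Fin n) ℂ) :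
    restrictTo I f ≠ 0 ↔ ∃ α ∈ f.support, ∀ i ∉ I, α i = 0 := by
  rw [← support_nonempty, support_restrictTo]
  simp [Finset.filter_nonempty_iff]

lemma dmin_le {w : Fin n → ℕ} {f : MvPolynomial (Fin n) ℂ} {α : Fin n →₀ ℕ}
    (hα : α ∈ f.support) : dmin w f ≤ wdeg w α :=
  Nat.sInf_le ⟨α, by simpa using hα, rfl⟩

lemma exists_dmin {w : Fin n → ℕ} {f : MvPolynomial (Fin n) ℂ} (hf : f ≠ 0) :
    ∃ α ∈ f.support, wdeg w α = dmin w f := by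
  have h : (wdeg w '' ↑f.support).Nonempty := by
    obtain ⟨α, hα⟩ := support_nonempty.2 hf
    exact ⟨wdeg w α, α, by simpa using hα, rfl⟩
  obtain ⟨α, hα, hw⟩ := Nat.sInf_mem h
  exact ⟨α, by simpa using hα, hw⟩

lemma csum_nat_cast (w : Fin n → ℕ) (α : Fin n →₀ ℕ) :
    csum (fun i => (w i : ℝ)) (fun i => (α i : ℝ)) = (wdeg w α : ℝ) := by
  simp only [csum_apply, wdeg, Nat.cast_sum, Nat.cast_mul]

/-- lower bound on the union set -/
lemma le_csum_of_mem_unionSet {w : Fin n → ℕ} {f : MvPolynomial (Fin n) ℂ}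
    {y : Fin n → ℝ} (hy : y ∈ unionSet f) :
    (dmin w f : ℝ) ≤ csum (fun i => (w i : ℝ)) y := by
  obtain ⟨α, hα, hle⟩ := mem_unionSet.1 hy
  calc (dmin w f : ℝ) ≤ (wdeg w α : ℝ) := by exact_mod_cast dmin_le hα
    _ = csum (fun i => (w i : ℝ)) (fun i => (α i : ℝ)) := (csum_nat_cast w α).symm
    _ ≤ csum (fun i => (w i : ℝ)) y := by
        simp only [csum_apply]
        exact Finset.sum_le_sum fun i _ =>
          mul_le_mul_of_nonneg_right (hle i) (Nat.cast_nonneg _)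

lemma nonneg_of_mem_unionSet {f : MvPolynomial (Fin n) ℂ} {y : Fin n → ℝ}
    (hy : y ∈ unionSet f) (i : Fin n) : 0 ≤ y i := by
  obtain ⟨α, _, hle⟩ := mem_unionSet.1 hy
  exact le_trans (Nat.cast_nonneg _) (hle i)

lemma cast_mem_unionSet {f : MvPolynomial (Fin n) ℂ} {α : Fin n →₀ ℕ}
    (hα : α ∈ f.support) : (fun i => (α i : ℝ)) ∈ unionSet f :=
  mem_unionSet.2 ⟨α, hα, fun i => le_refl _⟩

lemma unionSet_mono {f g : MvPolynomial (Fin n) ℂ} (h : f.support ⊆ g.support) :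
    unionSet f ⊆ unionSet g := fun y hy => by
  obtain ⟨α, hα, hle⟩ := mem_unionSet.1 hy
  exact mem_unionSet.2 ⟨α, h hα, hle⟩

lemma mem_newtonBoundary {f : MvPolynomial (Fin n) ℂ} {x : Fin n → ℝ} :
    x ∈ NewtonBoundary f ↔ ∃ w : Fin n → ℕ, (∀ i, 0 < w i) ∧
      x ∈ NewtonPolyhedron f ∧ ∑ i, x i * (w i : ℝ) = (dmin w f : ℝ) := by
  simp [NewtonBoundary, Set.mem_iUnion]
  tauto

end NewtonAux

namespace NewtonAux

variable {n : ℕ}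

lemma support_restrictTo_subset (I : Set (Fin n)) (f : MvPolynomial (Fin n) ℂ) :
    (restrictTo I f).support ⊆ f.support := by
  rw [support_restrictTo]; exact Finset.filter_subset _ _

lemma mem_support_restrictTo {I : Set (Fin n)} {f : MvPolynomial (Fin n) ℂ}
    {α : Fin n →₀ ℕ} (hα : α ∈ f.support) (h0 : ∀ i ∉ I, α i = 0) :
    α ∈ (restrictTo I f).support := by
  rw [support_restrictTo]; exact Finset.mem_filter.2 ⟨hα, h0⟩

lemma off_I_zero_of_mem_support {I : Set (Fin n)} {f : MvPolynomial (Fin n) ℂ}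
    {α : Fin n →₀ ℕ} (hα : α ∈ (restrictTo I f).support) : ∀ i ∉ I, α i = 0 :=
  (Finset.mem_filter.1 (by rwa [support_restrictTo] at hα)).2

lemma dmin_mono {w : Fin n → ℕ} {f g : MvPolynomial (Fin n) ℂ}
    (h : g.support ⊆ f.support) (hg : g ≠ 0) : dmin w f ≤ dmin w g := by
  obtain ⟨α, hα, hw⟩ := exists_dmin (w := w) hg
  rw [← hw]; exact dmin_le (h hα)

/-- The key per-element fact: a point of the union set of `f` on which
the `w`-functional is minimal and which vanishes off `I` lies in the union
set of `restrictTo I f`, on the minimal level of the `w`-functional. -/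
lemma elem_lemma (I : Set (Fin n)) (f : MvPolynomial (Fin n) ℂ) {w : Fin n → ℕ}
    {y : Fin n → ℝ} (hy : y ∈ unionSet f)
    (hL : csum (fun i => (w i : ℝ)) y = (dmin w f : ℝ))
    (hM : csum (fun i => if i ∈ I then (0:ℝ) else 1) y = 0) :
    y ∈ unionSet (restrictTo I f) ∧
      csum (fun i => (w i : ℝ)) y = (dmin w (restrictTo I f) : ℝ) := by
  obtain ⟨α, hα, hle⟩ := mem_unionSet.1 hy
  have hy0 : ∀ i, 0 ≤ y i := nonneg_of_mem_unionSet hy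
  -- each term of hM is zero
  have hterm : ∀ i ∈ Finset.univ, y i * (if i ∈ I then (0:ℝ) else 1) = 0 := by
    refine (Finset.sum_eq_zero_iff_of_nonneg ?_).1 hM
    intro i _
    exact mul_nonneg (hy0 i) (by split_ifs <;> norm_num)
  have hyI : ∀ i ∉ I, y i = 0 := by
    intro i hi
    have := hterm i (Finset.mem_univ i)
    simpa [if_neg hi] using this
  have hαI : ∀ i ∉ I, α i = 0 := by
    intro i hi
    have h1 : (α i : ℝ) ≤ 0 := hyI i hi ▸ hle i
    exact_mod_cast le_antisymm h1 (Nat.cast_nonneg _)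
  have hαg : α ∈ (restrictTo I f).support := mem_support_restrictTo hα hαI
  have hg : restrictTo I f ≠ 0 := fun h => by simp [h] at hαg
  have hyg : y ∈ unionSet (restrictTo I f) := mem_unionSet.2 ⟨α, hαg, hle⟩
  have h1 : dmin w f ≤ dmin w (restrictTo I f) :=
    dmin_mono (support_restrictTo_subset I f) hg
  have h2 : (dmin w (restrictTo I f) : ℝ) ≤ (dmin w f : ℝ) :=
    hL ▸ le_csum_of_mem_unionSet hyg
  have h3 : dmin w f = dmin w (restrictTo I f) :=
    le_antisymm h1 (by exact_mod_cast h2)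
  exact ⟨hyg, by rw [hL, h3]⟩

lemma convex_offI (I : Set (Fin n)) : Convex ℝ {y : Fin n → ℝ | ∀ i ∉ I, y i = 0} := by
  intro y hy z hz a b ha hb hab
  intro i hi
  simp [Pi.add_apply, hy i hi, hz i hi]

/-- vanishing of boundary points of `restrictTo I f` off `I`. -/
lemma offI_of_boundary {I : Set (Fin n)} {f : MvPolynomial (Fin n) ℂ}
    {w : Fin n → ℕ} (hw : ∀ i, 0 < w i) {x : Fin n → ℝ}
    (hx : x ∈ NewtonPolyhedron (restrictTo I f))
    (hL : csum (fun i => (w i : ℝ)) x = (dmin w (restrictTo I f) : ℝ)) :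
    ∀ i ∉ I, x i = 0 := by
  set g := restrictTo I f with hg
  have hface := mem_convexHull_face (csum (fun i => (w i : ℝ)))
    (dmin w g : ℝ) (unionSet g) (fun y hy => le_csum_of_mem_unionSet hy)
    (hx : x ∈ convexHull ℝ (unionSet g)) hL
  have hsub : unionSet g ∩ {y | csum (fun i => (w i : ℝ)) y = (dmin w g : ℝ)} ⊆
      {y : Fin n → ℝ | ∀ i ∉ I, y i = 0} := by
    rintro y ⟨hy, hLy⟩
    obtain ⟨α, hα, hle⟩ := mem_unionSet.1 hy
    have hd : (dmin w g : ℝ) ≤ (wdeg w α : ℝ) := by exact_mod_cast dmin_le hα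
    have hcast : (wdeg w α : ℝ) = ∑ i, (α i : ℝ) * (w i : ℝ) := by
      simp [wdeg]
    have hsum_le : ∀ i ∈ Finset.univ, (α i : ℝ) * (w i : ℝ) ≤ y i * (w i : ℝ) :=
      fun i _ => mul_le_mul_of_nonneg_right (hle i) (Nat.cast_nonneg _)
    have hsum_eq : ∑ i, (α i : ℝ) * (w i : ℝ) = ∑ i, y i * (w i : ℝ) := by
      have h1 : ∑ i, y i * (w i : ℝ) = (dmin w g : ℝ) := hLy
      have h2 : ∑ i, (α i : ℝ) * (w i : ℝ) ≤ ∑ i, y i * (w i : ℝ) :=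
        Finset.sum_le_sum hsum_le
      rw [← hcast] at h2 ⊢
      linarith
    have hterm : ∀ i ∈ Finset.univ, (α i : ℝ) * (w i : ℝ) = y i * (w i : ℝ) :=
      (Finset.sum_eq_sum_iff_of_le hsum_le).1 hsum_eq
    intro i hi
    have hwi : (0:ℝ) < (w i : ℝ) := by exact_mod_cast hw i
    have := hterm i (Finset.mem_univ i)
    have hyi : y i = (α i : ℝ) :=
      (mul_right_cancel₀ (ne_of_gt hwi) this.symm)
    rw [hyi]
    exact_mod_cast off_I_zero_of_mem_support hα i hi
  exact convexHull_min hsub (convex_offI I) hface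

end NewtonAux

namespace NewtonAux

variable {n : ℕ}

/-- `Γ(f) ∩ ℝ^I ⊆ Γ(f^I)` (unconditionally). -/
lemma inter_subset_boundary_restrict (I : Set (Fin n)) (f : MvPolynomial (Fin n) ℂ) :
    NewtonBoundary f ∩ {x : Fin n → ℝ | ∀ i ∉ I, x i = 0} ⊆
      NewtonBoundary (restrictTo I f) := by
  rintro x ⟨hxb, hxI⟩
  obtain ⟨w, hw, hxp, hxe⟩ := mem_newtonBoundary.1 hxb
  set g := restrictTo I f with hgdef
  have hL : csum (fun i => (w i : ℝ)) x = (dmin w f : ℝ) := hxe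
  have hM : csum (fun i => if i ∈ I then (0:ℝ) else 1) x = 0 := by
    rw [csum_apply]
    apply Finset.sum_eq_zero
    intro i _
    by_cases hi : i ∈ I
    · simp [hi]
    · simp [hi, hxI i hi]
  have h1 := mem_convexHull_face (csum (fun i => (w i : ℝ))) (dmin w f : ℝ)
    (unionSet f) (fun y hy => le_csum_of_mem_unionSet hy)
    (hxp : x ∈ convexHull ℝ (unionSet f)) hL
  have h2 := mem_convexHull_face (csum (fun i => if i ∈ I then (0:ℝ) else 1)) 0
    (unionSet f ∩ {y | csum (fun i => (w i : ℝ)) y = (dmin w f : ℝ)})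
    (fun y hy => by
      simp only [csum_apply]
      refine Finset.sum_nonneg fun i _ => mul_nonneg (nonneg_of_mem_unionSet hy.1 i) ?_
      split_ifs <;> norm_num)
    h1 hM
  have hsub : (unionSet f ∩ {y | csum (fun i => (w i : ℝ)) y = (dmin w f : ℝ)}) ∩
      {y | csum (fun i => if i ∈ I then (0:ℝ) else 1) y = 0} ⊆
      unionSet g ∩ {y | csum (fun i => (w i : ℝ)) y = (dmin w g : ℝ)} := by
    rintro y ⟨⟨hy, hLy⟩, hMy⟩
    exact elem_lemma I f hy hLy hMy
  have hconv : Convex ℝ (unionSet g ∩ {y | csum (fun i => (w i : ℝ)) y = (dmin w g : ℝ)})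
      → True := fun _ => trivial
  have hfinal : x ∈ convexHull ℝ (unionSet g) ∩
      {y | csum (fun i => (w i : ℝ)) y = (dmin w g : ℝ)} := by
    refine convexHull_min ?_ ?_ h2
    · intro y hy
      obtain ⟨h1', h2'⟩ := hsub hy
      exact ⟨subset_convexHull ℝ _ h1', h2'⟩
    · exact (convex_convexHull ℝ _).inter
        (convex_hyperplane (csum (fun i => (w i : ℝ))).isLinear _)
  exact mem_newtonBoundary.2 ⟨w, hw, hfinal.1, hfinal.2⟩

/-- `Γ(f^I) ⊆ Γ(f) ∩ ℝ^I` (assuming `f^I ≠ 0`). -/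
lemma boundary_restrict_subset_inter (I : Set (Fin n)) (f : MvPolynomial (Fin n) ℂ)
    (hg : restrictTo I f ≠ 0) :
    NewtonBoundary (restrictTo I f) ⊆
      NewtonBoundary f ∩ {x : Fin n → ℝ | ∀ i ∉ I, x i = 0} := by
  intro x hx
  set g := restrictTo I f with hgdef
  obtain ⟨w, hw, hxp, hxe⟩ := mem_newtonBoundary.1 hx
  have hxI : ∀ i ∉ I, x i = 0 := offI_of_boundary hw hxp hxe
  refine ⟨?_, hxI⟩
  -- modified weight
  set N := dmin w g + 1 with hN
  set w' : Fin n → ℕ := fun i => if i ∈ I then w i else N with hw'def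
  have hw' : ∀ i, 0 < w' i := by
    intro i
    by_cases hi : i ∈ I
    · simpa [hw'def, hi] using hw i
    · simp [hw'def, hi, hN]
  have hwdeg : ∀ α : Fin n →₀ ℕ, (∀ i ∉ I, α i = 0) → wdeg w' α = wdeg w α := by
    intro α h0
    refine Finset.sum_congr rfl fun i _ => ?_
    by_cases hi : i ∈ I
    · simp [hw'def, hi]
    · simp [h0 i hi]
  obtain ⟨α0, hα0, hd0⟩ := exists_dmin (w := w) hg
  have hα0f : α0 ∈ f.support := support_restrictTo_subset I f hα0
  have hα0I : ∀ i ∉ I, α0 i = 0 := off_I_zero_of_mem_support hα0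
  have hle : ∀ α ∈ f.support, dmin w g ≤ wdeg w' α := by
    intro α hα
    by_cases hc : ∀ i ∉ I, α i = 0
    · rw [hwdeg α hc]
      exact dmin_le (mem_support_restrictTo hα hc)
    · push_neg at hc
      obtain ⟨i, hiI, hi0⟩ := hc
      have h1 : α i * w' i ≤ wdeg w' α :=
        Finset.single_le_sum (f := fun j => α j * w' j)
          (fun j _ => Nat.zero_le _) (Finset.mem_univ i)
      have h2 : N ≤ α i * w' i := by
        have : w' i = N := by simp [hw'def, hiI]
        rw [this]
        exact Nat.le_mul_of_pos_left N (Nat.pos_of_ne_zero hi0)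
      omega
  have hdmin' : dmin w' f = dmin w g := by
    apply le_antisymm
    · have h1 : wdeg w' α0 = dmin w g := by rw [hwdeg α0 hα0I, hd0]
      exact h1 ▸ dmin_le hα0f
    · refine le_csInf ⟨wdeg w' α0, α0, by simpa using hα0f, rfl⟩ ?_
      rintro m ⟨α, hα, rfl⟩
      exact hle α (by simpa using hα)
  have hxpf : x ∈ NewtonPolyhedron f := by
    rw [np_eq] at hxp ⊢
    exact convexHull_mono (unionSet_mono (support_restrictTo_subset I f)) hxp
  have hsum : ∑ i, x i * (w' i : ℝ) = ∑ i, x i * (w i : ℝ) := by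
    refine Finset.sum_congr rfl fun i _ => ?_
    by_cases hi : i ∈ I
    · simp [hw'def, hi]
    · simp [hxI i hi]
  refine mem_newtonBoundary.2 ⟨w', hw', hxpf, ?_⟩
  rw [hsum, hdmin', hxe]

end NewtonAux

/-- `Γ(f^I) = Γ(f) ∩ ℝ^I` whenever `f^I ≢ 0`; and `Γ(f) ∩ ℝ^I` is nonempty if
and only if `f^I ≢ 0`. -/
theorem newtonBoundary_restrict {n : ℕ} (f : MvPolynomial (Fin n) ℂ)
    (hf : f ≠ 0) (I : Set (Fin n)) :
    (restrictTo I f ≠ 0 →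
        NewtonBoundary (restrictTo I f) =
          NewtonBoundary f ∩ {x : Fin n → ℝ | ∀ i ∉ I, x i = 0}) ∧
      ((NewtonBoundary f ∩ {x : Fin n → ℝ | ∀ i ∉ I, x i = 0}).Nonempty ↔
        restrictTo I f ≠ 0) := by
  open NewtonAux in
  constructor
  · intro hg
    exact Set.Subset.antisymm (boundary_restrict_subset_inter I f hg)
      (inter_subset_boundary_restrict I f)
  · constructor
    · rintro ⟨x, hx⟩
      have hxg : x ∈ NewtonBoundary (restrictTo I f) :=
        inter_subset_boundary_restrict I f hx
      obtain ⟨w, hw, hxp, hxe⟩ := mem_newtonBoundary.1 hxg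
      rw [np_eq] at hxp
      have hne : (unionSet (restrictTo I f)).Nonempty := by
        by_contra h
        rw [Set.not_nonempty_iff_eq_empty] at h
        rw [h, convexHull_empty] at hxp
        exact hxp
      obtain ⟨y, hy⟩ := hne
      obtain ⟨α, hα, _⟩ := mem_unionSet.1 hy
      intro h0
      rw [h0] at hα
      simp at hα
    · intro hg
      obtain ⟨α0, hα0, hd0⟩ := exists_dmin (w := fun _ => 1) hg
      refine ⟨fun i => (α0 i : ℝ), ?_⟩
      apply boundary_restrict_subset_inter I f hg
      refine mem_newtonBoundary.2 ⟨fun _ => 1, fun _ => Nat.one_pos, ?_, ?_⟩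
      · exact subset_convexHull ℝ _ (cast_mem_unionSet hα0)
      · have := csum_nat_cast (fun _ => 1) α0
        rw [csum_apply] at this
        rw [this, hd0]
end
end
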